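/- arXiv:1906.00712 — 2 statements merged into one kernel-verified Lean document; each statement's English description precedes it below -/
import Mathlib

section
/- (Furstenberg Intersection Lemma) Let (X,T) be a system with T abelian such that N_T(U,V) ∩ N_T(U,U) ≠ ∅ for every pair of nonempty open sets U,V ⊆ X. Then for all nonempty open U₁,V₁,U₂,V₂ ⊆ X there exist nonempty open sets U₃,V₃ ⊆ X such that N_T(U₃,V₃) ⊆ N_T(U₁,V₁) ∩ N_T(U₂,V₂). -/
/-!
Intersecting `P` with the preimage of `R` under some `t₁ ∈ N(P, R)` and applying the hypothesis
to this smaller set yields a time in `N(P, Q) ∩ N(R, R)` for an arbitrary third set `R`. Doing this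
twice and composing the two times gives `N(A, B) ∩ N(C, D) ≠ ∅` for any four sets. For
`s ∈ N(U₁, U₂) ∩ N(V₁, V₂)` one takes `U₃ = U₁ ∩ s⁻¹U₂` and `V₃ = V₁ ∩ s⁻¹V₂`: since `s` commutes
with every `t`, a witness `x` of `t ∈ N(U₃, V₃)` is carried to the witness `s • x` of
`t ∈ N(U₂, V₂)`.
-/

open Set

section HittingTimes

variable {T X : Type*}

section Monoid

variable [Monoid T] [MulAction T X]

variable (T) in
/-- The set `N_T(U, V)`. -/
def hittingTimes (U V : Set X) : Set T :=
  {t : T | ((fun x : X => t • x) '' U ∩ V).Nonempty}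

variable {U V U' V' : Set X} {t : T}

theorem mem_hittingTimes : t ∈ hittingTimes T U V ↔ ∃ x ∈ U, t • x ∈ V := by
  simp [hittingTimes, Set.Nonempty]

theorem mem_hittingTimes_iff_inter_preimage_nonempty :
    t ∈ hittingTimes T U V ↔ (U ∩ (fun x : X => t • x) ⁻¹' V).Nonempty := by
  rw [mem_hittingTimes]
  rfl

theorem hittingTimes_mono (hU : U ⊆ U') (hV : V ⊆ V') :
    hittingTimes T U V ⊆ hittingTimes T U' V' := fun _ ht => by
  obtain ⟨x, hx, htx⟩ := mem_hittingTimes.1 ht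
  exact mem_hittingTimes.2 ⟨x, hU hx, hV htx⟩

theorem mul_mem_hittingTimes {r : T} (ht : t ∈ hittingTimes T U ((fun x : X => r • x) ⁻¹' V)) :
    r * t ∈ hittingTimes T U V := by
  obtain ⟨x, hx, htx⟩ := mem_hittingTimes.1 ht
  exact mem_hittingTimes.2 ⟨x, hx, by rwa [mul_smul]⟩

end Monoid

section CommMonoid

variable [CommMonoid T] [MulAction T X] {U V U' V' : Set X}

theorem hittingTimes_inter_preimage_subset_right (s : T) :
    hittingTimes T (U ∩ (fun x : X => s • x) ⁻¹' U') (V ∩ (fun x : X => s • x) ⁻¹' V')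
      ⊆ hittingTimes T U' V' := fun t ht => by
  obtain ⟨x, ⟨-, hsx⟩, ⟨-, hstx⟩⟩ := mem_hittingTimes.1 ht
  refine mem_hittingTimes.2 ⟨s • x, hsx, ?_⟩
  rwa [smul_comm]

theorem hittingTimes_inter_preimage_subset (s : T) :
    hittingTimes T (U ∩ (fun x : X => s • x) ⁻¹' U') (V ∩ (fun x : X => s • x) ⁻¹' V')
      ⊆ hittingTimes T U V ∩ hittingTimes T U' V' :=
  subset_inter (hittingTimes_mono inter_subset_left inter_subset_left)
    (hittingTimes_inter_preimage_subset_right s)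

variable [TopologicalSpace X] (hc : ∀ t : T, Continuous fun x : X => t • x)
  (h : ∀ U V : Set X, IsOpen U → U.Nonempty → IsOpen V → V.Nonempty →
    (hittingTimes T U V ∩ hittingTimes T U U).Nonempty)
include hc h

theorem hittingTimes_inter_hittingTimes_self_nonempty {P Q R : Set X}
    (hP : IsOpen P) (hPn : P.Nonempty) (hQ : IsOpen Q) (hQn : Q.Nonempty)
    (hR : IsOpen R) (hRn : R.Nonempty) :
    (hittingTimes T P Q ∩ hittingTimes T R R).Nonempty := by
  obtain ⟨t₁, ht₁, -⟩ := h P R hP hPn hR hRn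
  set P' := P ∩ (fun x : X => t₁ • x) ⁻¹' R
  have hP' : IsOpen P' := hP.inter (hR.preimage (hc t₁))
  have hP'n : P'.Nonempty := mem_hittingTimes_iff_inter_preimage_nonempty.1 ht₁
  obtain ⟨t₂, hPQ, hP'P'⟩ := h P' Q hP' hP'n hQ hQn
  exact ⟨t₂, hittingTimes_mono inter_subset_left subset_rfl hPQ,
    hittingTimes_inter_preimage_subset_right t₁ hP'P'⟩

theorem hittingTimes_inter_nonempty {A B C D : Set X}
    (hA : IsOpen A) (hAn : A.Nonempty) (hB : IsOpen B) (hBn : B.Nonempty)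
    (hC : IsOpen C) (hCn : C.Nonempty) (hD : IsOpen D) (hDn : D.Nonempty) :
    (hittingTimes T A B ∩ hittingTimes T C D).Nonempty := by
  obtain ⟨r, hCD, hBB⟩ := hittingTimes_inter_hittingTimes_self_nonempty hc h hC hCn hD hDn hB hBn
  set B' := (fun x : X => r • x) ⁻¹' B
  set C' := C ∩ (fun x : X => r • x) ⁻¹' D
  have hB'n : B'.Nonempty := by
    obtain ⟨x, -, hrx⟩ := mem_hittingTimes.1 hBB
    exact ⟨x, hrx⟩
  obtain ⟨t, hAB', hC'C'⟩ := hittingTimes_inter_hittingTimes_self_nonempty hc h hA hAn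
    (hB.preimage (hc r)) hB'n (hC.inter (hD.preimage (hc r)))
    (mem_hittingTimes_iff_inter_preimage_nonempty.1 hCD)
  exact ⟨r * t, mul_mem_hittingTimes hAB',
    mul_mem_hittingTimes (hittingTimes_mono inter_subset_left inter_subset_right hC'C')⟩

end CommMonoid

end HittingTimes

/-- Furstenberg Intersection Lemma. -/
theorem furstenberg_intersection {T X : Type*} [CommMonoid T] [TopologicalSpace X]
    [MulAction T X] (hc : ∀ t : T, Continuous fun x : X => t • x)
    (h : ∀ U V : Set X, IsOpen U → U.Nonempty → IsOpen V → V.Nonempty →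
      ({t : T | ((fun x : X => t • x) '' U ∩ V).Nonempty}
        ∩ {t : T | ((fun x : X => t • x) '' U ∩ U).Nonempty}).Nonempty) :
    ∀ U₁ V₁ U₂ V₂ : Set X, IsOpen U₁ → U₁.Nonempty → IsOpen V₁ → V₁.Nonempty →
      IsOpen U₂ → U₂.Nonempty → IsOpen V₂ → V₂.Nonempty →
      ∃ U₃ V₃ : Set X, IsOpen U₃ ∧ U₃.Nonempty ∧ IsOpen V₃ ∧ V₃.Nonempty ∧
        {t : T | ((fun x : X => t • x) '' U₃ ∩ V₃).Nonempty}
          ⊆ {t : T | ((fun x : X => t • x) '' U₁ ∩ V₁).Nonempty}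
            ∩ {t : T | ((fun x : X => t • x) '' U₂ ∩ V₂).Nonempty} := by
  intro U₁ V₁ U₂ V₂ hU₁ hU₁n hV₁ hV₁n hU₂ hU₂n hV₂ hV₂n
  obtain ⟨s, hU, hV⟩ := hittingTimes_inter_nonempty hc h hU₁ hU₁n hU₂ hU₂n hV₁ hV₁n hV₂ hV₂n
  exact ⟨_, _, hU₁.inter (hU₂.preimage (hc s)),
    mem_hittingTimes_iff_inter_preimage_nonempty.1 hU,
    hV₁.inter (hV₂.preimage (hc s)), mem_hittingTimes_iff_inter_preimage_nonempty.1 hV,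
    hittingTimes_inter_preimage_subset s⟩
end

section
/- For a semiflow (X,S), the following are equivalent: (1) (X,S) is strongly product transitive, i.e. the diagonal action of S on X^k is strongly transitive for every k ∈ ℕ; (2) the collection {N_S(U,x) : x ∈ X, U nonempty open in X} of hitting sets generates a filter of subsets of S, i.e. every finite intersection of such sets contains a set of the same form and in particular is nonempty. -/
/-!
A backward orbit `{y | ∃ s, s • y = x}` in `X^k` is dense iff it meets every open box `∏ Uᵢ`, and
it meets such a box iff some single `s` maps a point of each `Uᵢ` to `xᵢ`, i.e. iff the hitting
sets `N_S(Uᵢ, xᵢ)` have a common element.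
-/

open Set

theorem dense_iff_univ_pi_inter_nonempty {ι : Type*} [Finite ι] {A : ι → Type*}
    [∀ i, TopologicalSpace (A i)] {D : Set (∀ i, A i)} :
    Dense D ↔ ∀ U : ∀ i, Set (A i), (∀ i, IsOpen (U i)) → (∀ i, (U i).Nonempty) →
      (univ.pi U ∩ D).Nonempty := by
  refine ⟨fun hD U hUo hUne => ?_, fun h => ?_⟩
  · exact hD.inter_open_nonempty _ (isOpen_set_pi finite_univ fun i _ => hUo i)
      (univ_pi_nonempty_iff.2 hUne)
  · rw [dense_iff_inter_open]
    rintro V hV ⟨f, hf⟩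
    obtain ⟨u, hu, huV⟩ := isOpen_pi_iff'.1 hV f hf
    obtain ⟨y, hyu, hyD⟩ := h u (fun i => (hu i).1) fun i => ⟨f i, (hu i).2⟩
    exact ⟨y, huV hyu, hyD⟩

section HittingSet

variable (S : Type*) {X : Type*} [Monoid S] [MulAction S X]

def hittingSet (U : Set X) (x : X) : Set S :=
  {s | x ∈ (fun z : X => s • z) '' U}

variable {S}

theorem inter_setOf_smul_eq_nonempty_iff {U : Set X} {x : X} :
    (U ∩ {y | ∃ s : S, s • y = x}).Nonempty ↔ (hittingSet S U x).Nonempty := by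
  constructor
  · rintro ⟨y, hyU, s, rfl⟩
    exact ⟨s, y, hyU, rfl⟩
  · rintro ⟨s, y, hyU, rfl⟩
    exact ⟨y, hyU, s, rfl⟩

theorem hittingSet_univ_pi {ι : Type*} (U : ι → Set X) (x : ι → X) :
    hittingSet S (univ.pi U) x = ⋂ i, hittingSet S (U i) (x i) := by
  ext s
  rw [mem_iInter]
  constructor
  · rintro ⟨y, hyU, rfl⟩ i
    exact ⟨y i, hyU i trivial, rfl⟩
  · intro hs
    choose z hzU hzx using hs
    exact ⟨z, fun i _ => hzU i, funext hzx⟩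

end HittingSet

theorem stronglyProductTransitive_iff_filter_general {S X : Type*} [Monoid S] [TopologicalSpace X]
    [MulAction S X] :
    (∀ k : ℕ, ∀ x : Fin k → X,
        Dense {y : Fin k → X | ∃ s : S, s • y = x})
      ↔ (∀ (n : ℕ) (U : Fin n → Set X) (x : Fin n → X),
          (∀ i, IsOpen (U i)) → (∀ i, (U i).Nonempty) →
          (⋂ i, {s : S | x i ∈ (fun z : X => s • z) '' U i}).Nonempty) := by
  have meets_box_iff (n : ℕ) (U : Fin n → Set X) (x : Fin n → X) :
      (univ.pi U ∩ {y : Fin n → X | ∃ s : S, s • y = x}).Nonempty ↔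
        (⋂ i, {s : S | x i ∈ (fun z : X => s • z) '' U i}).Nonempty := by
    rw [inter_setOf_smul_eq_nonempty_iff, hittingSet_univ_pi]
    rfl
  simp only [dense_iff_univ_pi_inter_nonempty, meets_box_iff]
  exact ⟨fun h n U x => h n x U, fun h n x U => h n U x⟩

/-- A semiflow is strongly product transitive iff the collection of hitting sets
N_S(U,x) has the finite intersection property (generates a filter). -/
theorem stronglyProductTransitive_iff_filter {S X : Type*} [Monoid S] [TopologicalSpace X]
    [MulAction S X] (hc : ∀ s : S, Continuous fun x : X => s • x) :
    (∀ k : ℕ, ∀ x : Fin k → X,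
        Dense {y : Fin k → X | ∃ s : S, s • y = x})
      ↔ (∀ (n : ℕ) (U : Fin n → Set X) (x : Fin n → X),
          (∀ i, IsOpen (U i)) → (∀ i, (U i).Nonempty) →
          (⋂ i, {s : S | x i ∈ (fun z : X => s • z) '' U i}).Nonempty) :=
  stronglyProductTransitive_iff_filter_general
end
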